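/- arXiv:1408.3595 — 5 statements merged into one kernel-verified Lean document; each statement's English description precedes it below -/
import Mathlib

section
/- Let f ∈ S(m,L) with minimizer y_⋆ and set g(x) = f(x) - f(y_⋆) - (m/2)‖x-y_⋆‖². Define q_k = (L-m)·g(y_k) - ½‖∇g(y_k)‖² for a sequence y_k. Then q_k ≥ 0 for all k, and writing ỹ_k = y_k - y_⋆, ũ_k = ∇f(y_k) - ∇f(y_⋆): (i) (ũ_0 - mỹ_0)ᵀ(Lỹ_0 - ũ_0) ≥ q_0, and (ii) (ũ_t - mỹ_t)ᵀ(L(ỹ_t - ỹ_{t-1}) - (ũ_t - ũ_{t-1})) ≥ q_t - q_{t-1} for t ≥ 1. -/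
/-!
The shifted function `g = f - f(y⋆) - (m/2)‖· - y⋆‖²` is convex with `(L-m)`-Lipschitz gradient
`∇g = ∇f - m(· - y⋆)`, and `∇g(y⋆) = 0`, `g(y⋆) = 0`. Multiplying the co-coercivity inequality
of `g` between two points `x, z` by `L - m` and expanding `‖∇g z - ∇g x‖²` gives, for
`q = (L-m) g - ½‖∇g‖²`, `q(x) - q(z) ≤ ⟪∇g x, (L-m)(x - z) - (∇g x - ∇g z)⟫`.
The three claims are this inequality for `(x, z) = (y⋆, y_k)`, `(y_0, y⋆)` and `(y_t, y_{t-1})`.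
-/

open RealInnerProductSpace

section Gradient

variable {F : Type*} [NormedAddCommGroup F] [InnerProductSpace ℝ F] [CompleteSpace F]
  {f : F → ℝ} {gf : F → F}

theorem HasGradientAt.neg {g : F} {x : F} (h : HasGradientAt f g x) :
    HasGradientAt (fun z => -f z) (-g) x := by
  rw [hasGradientAt_iff_hasFDerivAt] at h ⊢
  rw [map_neg]
  exact h.neg

theorem HasGradientAt.sub_const_sub_mul_norm_sub_sq {g x : F} (h : HasGradientAt f g x)
    (a m : ℝ) (c : F) :
    HasGradientAt (fun z => f z - a - m / 2 * ‖z - c‖ ^ 2) (g - m • (x - c)) x := by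
  rw [hasGradientAt_iff_hasFDerivAt] at h ⊢
  have hsq := ((hasFDerivAt_id x).sub_const c).norm_sq.const_mul (m / 2)
  refine ((h.sub_const a).sub hsq).congr_fderiv ?_
  ext v
  simp only [map_sub, ContinuousLinearMap.comp_id, sub_apply,
    InnerProductSpace.toDual_apply_apply, real_inner_comm v, smul_apply,
    coe_innerSL_apply, nsmul_eq_mul, Nat.cast_ofNat, smul_eq_mul, map_smul, id_eq]
  ring

theorem HasGradientAt.hasDerivAt_add_smul {g x v : F} {t : ℝ}
    (h : HasGradientAt f g (x + t • v)) :
    HasDerivAt (fun s : ℝ => f (x + s • v)) ⟪g, v⟫ t := by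
  have hline : HasDerivAt (fun s : ℝ => x + s • v) v t := by
    simpa using ((hasDerivAt_id t).smul_const v).const_add x
  have h2 := h.hasFDerivAt.comp_hasDerivAt t hline
  simp only [InnerProductSpace.toDual_apply_apply] at h2
  exact h2

theorem le_add_inner_add_of_inner_gradient_sub_le (hgrad : ∀ x, HasGradientAt f (gf x) x)
    {K : ℝ} (hK : ∀ a b, ⟪gf a - gf b, a - b⟫ ≤ K * ‖a - b‖ ^ 2) (x y : F) :
    f y ≤ f x + ⟪gf x, y - x⟫ + K / 2 * ‖y - x‖ ^ 2 := by
  set v := y - x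
  let φ : ℝ → ℝ := fun t => f (x + t • v) - t * ⟪gf x, v⟫ - K / 2 * (t ^ 2 * ‖v‖ ^ 2)
  have hφ (t : ℝ) : HasDerivAt φ (⟪gf (x + t • v), v⟫ - ⟪gf x, v⟫ - K * t * ‖v‖ ^ 2) t := by
    have hsq := ((hasDerivAt_pow 2 t).mul_const (‖v‖ ^ 2)).const_mul (K / 2)
    refine (((hgrad (x + t • v)).hasDerivAt_add_smul.sub
      (hasDerivAt_mul_const ⟪gf x, v⟫)).sub hsq).congr_deriv ?_
    push_cast
    ring
  have hφ' (t : ℝ) (ht : 0 < t) : ⟪gf (x + t • v), v⟫ - ⟪gf x, v⟫ - K * t * ‖v‖ ^ 2 ≤ 0 := by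
    -- `t • v` is the displacement from `x`, so `hK` bounds `t` times the derivative
    have h := hK (x + t • v) x
    rw [add_sub_cancel_left, real_inner_smul_right, norm_smul, Real.norm_of_nonneg ht.le,
      inner_sub_left] at h
    nlinarith
  have hanti : AntitoneOn φ (Set.Ici 0) :=
    antitoneOn_of_hasDerivWithinAt_nonpos (convex_Ici 0)
      (fun t _ => (hφ t).continuousAt.continuousWithinAt) (fun t _ => (hφ t).hasDerivWithinAt)
      (fun t ht => hφ' t (by simpa using ht))
  have h01 := hanti Set.self_mem_Ici (Set.mem_Ici.mpr zero_le_one) zero_le_one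
  simp only [φ, v, zero_smul, add_zero, one_smul, add_sub_cancel, zero_mul, one_mul, one_pow,
    sub_zero, ne_eq, OfNat.ofNat_ne_zero, not_false_eq_true, zero_pow, mul_zero] at h01
  linarith

theorem add_inner_add_le_of_le_inner_gradient_sub (hgrad : ∀ x, HasGradientAt f (gf x) x)
    {μ : ℝ} (hμ : ∀ a b, μ * ‖a - b‖ ^ 2 ≤ ⟪gf a - gf b, a - b⟫) (x y : F) :
    f x + ⟪gf x, y - x⟫ + μ / 2 * ‖y - x‖ ^ 2 ≤ f y := by
  have hneg (a b : F) : ⟪-gf a - -gf b, a - b⟫ ≤ -μ * ‖a - b‖ ^ 2 := by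
    rw [neg_sub_neg, ← neg_sub, inner_neg_left]
    linarith [hμ a b]
  have h := le_add_inner_add_of_inner_gradient_sub_le (fun z => (hgrad z).neg) hneg x y
  rw [inner_neg_left] at h
  linarith

theorem add_inner_add_norm_gradient_sub_sq_le (hgrad : ∀ x, HasGradientAt f (gf x) x)
    {K : ℝ} (hK : 0 < K)
    (hmono : ∀ a b, 0 ≤ ⟪gf a - gf b, a - b⟫)
    (hup : ∀ a b, ⟪gf a - gf b, a - b⟫ ≤ K * ‖a - b‖ ^ 2) (x z : F) :
    f x + ⟪gf x, z - x⟫ + 1 / (2 * K) * ‖gf z - gf x‖ ^ 2 ≤ f z := by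
  -- bound `f` at the gradient step `w` from `z` above using `z` and below using `x`
  set u := gf z - gf x
  set w := z - K⁻¹ • u
  have hupper := le_add_inner_add_of_inner_gradient_sub_le hgrad hup z w
  have hlower := add_inner_add_le_of_le_inner_gradient_sub hgrad (μ := 0) (by simpa using hmono) x w
  rw [show w - z = -(K⁻¹ • u) by simp [w], inner_neg_right, real_inner_smul_right, norm_neg,
    norm_smul, Real.norm_of_nonneg (inv_nonneg.mpr hK.le)] at hupper
  rw [show w - x = (z - x) - K⁻¹ • u by simp only [w]; abel, inner_sub_right,
    real_inner_smul_right] at hlower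
  have hu : K⁻¹ * ⟪gf z, u⟫ - K⁻¹ * ⟪gf x, u⟫ = K⁻¹ * ‖u‖ ^ 2 := by
    rw [← mul_sub, ← inner_sub_left, real_inner_self_eq_norm_sq]
  have hsq : K / 2 * (K⁻¹ * ‖u‖) ^ 2 = K⁻¹ * ‖u‖ ^ 2 - 1 / (2 * K) * ‖u‖ ^ 2 := by
    field_simp
    ring
  linarith

theorem mul_sub_half_norm_sq_sub_le_inner (hgrad : ∀ x, HasGradientAt f (gf x) x)
    {K : ℝ} (hK : 0 < K)
    (hmono : ∀ a b, 0 ≤ ⟪gf a - gf b, a - b⟫)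
    (hup : ∀ a b, ⟪gf a - gf b, a - b⟫ ≤ K * ‖a - b‖ ^ 2) (x z : F) :
    (K * f x - 1 / 2 * ‖gf x‖ ^ 2) - (K * f z - 1 / 2 * ‖gf z‖ ^ 2)
      ≤ ⟪gf x, K • (x - z) - (gf x - gf z)⟫ := by
  have h := mul_le_mul_of_nonneg_left
    (add_inner_add_norm_gradient_sub_sq_le hgrad hK hmono hup x z) hK.le
  have hhalf : K * (1 / (2 * K) * ‖gf z - gf x‖ ^ 2) = 1 / 2 * ‖gf z - gf x‖ ^ 2 := by
    field_simp
  rw [mul_add, mul_add, hhalf, norm_sub_sq_real, ← neg_sub x z, inner_neg_right,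
    real_inner_comm (gf x)] at h
  rw [inner_sub_right, inner_sub_right, real_inner_smul_right, real_inner_self_eq_norm_sq]
  linarith

end Gradient

theorem off_by_one_key_inequalities_general {d : ℕ} (m L : ℝ) (hmL : m < L)
    (f : EuclideanSpace ℝ (Fin d) → ℝ)
    (gf : EuclideanSpace ℝ (Fin d) → EuclideanSpace ℝ (Fin d))
    (hgrad : ∀ x, HasGradientAt f (gf x) x)
    (hlow : ∀ x y, m * ‖x - y‖ ^ 2 ≤ ⟪gf x - gf y, x - y⟫)
    (hup : ∀ x y, ⟪gf x - gf y, x - y⟫ ≤ L * ‖x - y‖ ^ 2)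
    (ystar : EuclideanSpace ℝ (Fin d)) (hstar : gf ystar = 0)
    (y : ℕ → EuclideanSpace ℝ (Fin d)) :
    (∀ k : ℕ, 0 ≤
      (L - m) * (f (y k) - f ystar - (m / 2) * ‖y k - ystar‖ ^ 2)
        - (1 / 2) * ‖gf (y k) - m • (y k - ystar)‖ ^ 2) ∧
    (⟪gf (y 0) - gf ystar - m • (y 0 - ystar), L • (y 0 - ystar) - (gf (y 0) - gf ystar)⟫ ≥
      (L - m) * (f (y 0) - f ystar - (m / 2) * ‖y 0 - ystar‖ ^ 2)
        - (1 / 2) * ‖gf (y 0) - m • (y 0 - ystar)‖ ^ 2) ∧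
    (∀ t : ℕ, 1 ≤ t →
      ⟪gf (y t) - gf ystar - m • (y t - ystar),
          L • ((y t - ystar) - (y (t - 1) - ystar))
            - ((gf (y t) - gf ystar) - (gf (y (t - 1)) - gf ystar))⟫ ≥
        ((L - m) * (f (y t) - f ystar - (m / 2) * ‖y t - ystar‖ ^ 2)
            - (1 / 2) * ‖gf (y t) - m • (y t - ystar)‖ ^ 2)
          - ((L - m) * (f (y (t - 1)) - f ystar - (m / 2) * ‖y (t - 1) - ystar‖ ^ 2)
            - (1 / 2) * ‖gf (y (t - 1)) - m • (y (t - 1) - ystar)‖ ^ 2)) := by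
  have hinner (a b : EuclideanSpace ℝ (Fin d)) :
      ⟪(gf a - m • (a - ystar)) - (gf b - m • (b - ystar)), a - b⟫
        = ⟪gf a - gf b, a - b⟫ - m * ‖a - b‖ ^ 2 := by
    rw [show (gf a - m • (a - ystar)) - (gf b - m • (b - ystar)) = (gf a - gf b) - m • (a - b)
      by module, inner_sub_left, real_inner_smul_left, real_inner_self_eq_norm_sq]
  have key := mul_sub_half_norm_sq_sub_le_inner
    (fun x => (hgrad x).sub_const_sub_mul_norm_sub_sq (f ystar) m ystar) (sub_pos.mpr hmL)
    (fun a b => by linarith [hinner a b, hlow a b]) (fun a b => by linarith [hinner a b, hup a b])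
  refine ⟨fun k => by simpa [hstar] using key ystar (y k), ?_, fun t _ => ?_⟩
  · have hv : L • (y 0 - ystar) - (gf (y 0) - gf ystar) = (L - m) • (y 0 - ystar)
        - (gf (y 0) - m • (y 0 - ystar) - (gf ystar - m • (ystar - ystar))) := by
      rw [hstar]
      module
    rw [ge_iff_le, hv, hstar, sub_zero]
    simpa [hstar] using key (y 0) ystar
  · have hv : L • ((y t - ystar) - (y (t - 1) - ystar))
          - ((gf (y t) - gf ystar) - (gf (y (t - 1)) - gf ystar))
        = (L - m) • (y t - y (t - 1))
          - ((gf (y t) - m • (y t - ystar)) - (gf (y (t - 1)) - m • (y (t - 1) - ystar))) := by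
      module
    rw [ge_iff_le, hv, hstar, sub_zero]
    exact key (y t) (y (t - 1))

/-- The key telescoping inequalities used to prove the off-by-one IQC: with
`g(x) = f(x) - f(y⋆) - (m/2)‖x-y⋆‖²` and `q_k = (L-m)g(y_k) - ½‖∇g(y_k)‖²`, one has
`q_k ≥ 0`, the sector term is bounded below by `q_0`, and the off-by-one term at time
`t` is bounded below by `q_t - q_{t-1}`. -/
theorem off_by_one_key_inequalities {d : ℕ} (m L : ℝ) (hm : 0 < m) (hmL : m < L)
    (f : EuclideanSpace ℝ (Fin d) → ℝ)
    (gf : EuclideanSpace ℝ (Fin d) → EuclideanSpace ℝ (Fin d))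
    (hgrad : ∀ x, HasGradientAt f (gf x) x)
    (hlow : ∀ x y, m * ‖x - y‖ ^ 2 ≤ ⟪gf x - gf y, x - y⟫)
    (hup : ∀ x y, ⟪gf x - gf y, x - y⟫ ≤ L * ‖x - y‖ ^ 2)
    (ystar : EuclideanSpace ℝ (Fin d)) (hstar : gf ystar = 0)
    (y : ℕ → EuclideanSpace ℝ (Fin d)) :
    (∀ k : ℕ, 0 ≤
      (L - m) * (f (y k) - f ystar - (m / 2) * ‖y k - ystar‖ ^ 2)
        - (1 / 2) * ‖gf (y k) - m • (y k - ystar)‖ ^ 2) ∧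
    (⟪gf (y 0) - gf ystar - m • (y 0 - ystar), L • (y 0 - ystar) - (gf (y 0) - gf ystar)⟫ ≥
      (L - m) * (f (y 0) - f ystar - (m / 2) * ‖y 0 - ystar‖ ^ 2)
        - (1 / 2) * ‖gf (y 0) - m • (y 0 - ystar)‖ ^ 2) ∧
    (∀ t : ℕ, 1 ≤ t →
      ⟪gf (y t) - gf ystar - m • (y t - ystar),
          L • ((y t - ystar) - (y (t - 1) - ystar))
            - ((gf (y t) - gf ystar) - (gf (y (t - 1)) - gf ystar))⟫ ≥
        ((L - m) * (f (y t) - f ystar - (m / 2) * ‖y t - ystar‖ ^ 2)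
            - (1 / 2) * ‖gf (y t) - m • (y t - ystar)‖ ^ 2)
          - ((L - m) * (f (y (t - 1)) - f ystar - (m / 2) * ‖y (t - 1) - ystar‖ ^ 2)
            - (1 / 2) * ‖gf (y (t - 1)) - m • (y (t - 1) - ystar)‖ ^ 2)) :=
  off_by_one_key_inequalities_general m L hmL f gf hgrad hlow hup ystar hstar y
end

section
/- (Weighted off-by-one ρ-hard IQC) Let f ∈ S(m,L) with u_⋆ = ∇f(y_⋆) and let 0 ≤ ρ̄ ≤ ρ ≤ 1. For any sequence y_0, y_1, ... in ℝ^d, writing ỹ_k = y_k - y_⋆ and ũ_k = ∇f(y_k) - u_⋆, we have for every k ≥ 0: (ũ_0 - mỹ_0)ᵀ(Lỹ_0 - ũ_0) + Σ_{t=1}^{k} ρ^{-2t}·(ũ_t - mỹ_t)ᵀ(L(ỹ_t - ρ̄²ỹ_{t-1}) - (ũ_t - ρ̄²ũ_{t-1})) ≥ 0. -/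
open RealInnerProductSpace Finset

/-! The function `h = f - (m/2)‖·‖²` is convex with `(L - m)`-Lipschitz gradient `∇h = ∇f - m·id`,
so it satisfies the interpolation inequality
`‖∇h x - ∇h y‖² / 2 ≤ (L - m) (h x - h y - ⟪∇h y, x - y⟫)`.
In terms of `∇h` the general term is `(1 - ρ̄²) s_t + ρ̄² p_t`, with `s_t` the sector term and `p_t`
the off-by-one term. Interpolation between `(y⋆, y_t)` and between `(y_{t-1}, y_t)` gives
`s_t ≥ φ_t` and `p_t ≥ φ_t - φ_{t-1}` for the nonnegative potential
`φ_t = (L - m) (h y_t - h y⋆ - ⟪∇h y⋆, y_t - y⋆⟫) - ‖∇h y_t - ∇h y⋆‖² / 2`.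
Hence the `t`-th term is at least `φ_t - ρ̄² φ_{t-1}`, and as `ρ^{-2t} ρ̄² ≤ ρ^{-2(t-1)}` the weighted
sum telescopes to at least `ρ^{-2k} φ_k ≥ 0`. -/

lemma apply_zero_le_apply_one_of_hasDerivAt_nonneg {ψ ψ' : ℝ → ℝ}
    (hψ : ∀ s, HasDerivAt ψ (ψ' s) s) (hψ' : ∀ s ∈ Set.Ioo (0 : ℝ) 1, 0 ≤ ψ' s) : ψ 0 ≤ ψ 1 :=
  monotoneOn_of_hasDerivWithinAt_nonneg (convex_Icc 0 1)
    (fun s _ => (hψ s).continuousAt.continuousWithinAt) (fun s _ => (hψ s).hasDerivWithinAt)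
    (by simpa using hψ') (by simp) (by simp) zero_le_one

section ConvexSmooth

variable {E : Type*} [NormedAddCommGroup E] [InnerProductSpace ℝ E] [CompleteSpace E]
  {h : E → ℝ} {gh : E → E}

lemma hasDerivAt_along_line_sub_inner (hgrad : ∀ z, HasGradientAt h (gh z) z) (x y : E) (s : ℝ) :
    HasDerivAt (fun s : ℝ => h (y + s • (x - y)) - s * ⟪gh y, x - y⟫)
      ⟪gh (y + s • (x - y)) - gh y, x - y⟫ s := by
  have hline : HasDerivAt (fun s : ℝ => y + s • (x - y)) (x - y) s := by
    simpa using ((hasDerivAt_id s).smul_const (x - y)).const_add y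
  have hcomp : HasDerivAt (fun s : ℝ => h (y + s • (x - y))) ⟪gh (y + s • (x - y)), x - y⟫ s :=
    (hgrad _).hasFDerivAt.comp_hasDerivAt s hline
  rw [inner_sub_left]
  exact hcomp.sub (hasDerivAt_mul_const _)

lemma add_inner_le_of_monotone_gradient (hgrad : ∀ z, HasGradientAt h (gh z) z)
    (hmono : ∀ a b, 0 ≤ ⟪gh a - gh b, a - b⟫) (x y : E) :
    h y + ⟪gh y, x - y⟫ ≤ h x := by
  have key := apply_zero_le_apply_one_of_hasDerivAt_nonneg
    (hasDerivAt_along_line_sub_inner hgrad x y) fun s hs => by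
      have hs_mono := hmono (y + s • (x - y)) y
      rw [add_sub_cancel_left, real_inner_smul_right] at hs_mono
      exact nonneg_of_mul_nonneg_right hs_mono hs.1
  simp only [zero_smul, add_zero, zero_mul, sub_zero, one_smul, add_sub_cancel, one_mul] at key
  linarith

lemma le_add_inner_add_of_gradient_le {M : ℝ} (hgrad : ∀ z, HasGradientAt h (gh z) z)
    (hsmooth : ∀ a b, ⟪gh a - gh b, a - b⟫ ≤ M * ‖a - b‖ ^ 2) (x y : E) :
    h x ≤ h y + ⟪gh y, x - y⟫ + M / 2 * ‖x - y‖ ^ 2 := by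
  have hquad (s : ℝ) : HasDerivAt (fun s : ℝ => M / 2 * ‖x - y‖ ^ 2 * s ^ 2)
      (M * ‖x - y‖ ^ 2 * s) s :=
    ((hasDerivAt_pow 2 s).const_mul _).congr_deriv (by ring)
  have key := apply_zero_le_apply_one_of_hasDerivAt_nonneg
    (fun s => (hquad s).sub (hasDerivAt_along_line_sub_inner hgrad x y s)) fun s hs => by
      have hs_smooth := hsmooth (y + s • (x - y)) y
      rw [add_sub_cancel_left, real_inner_smul_right, norm_smul, mul_pow, Real.norm_eq_abs,
        sq_abs] at hs_smooth
      have : ⟪gh (y + s • (x - y)) - gh y, x - y⟫ ≤ M * ‖x - y‖ ^ 2 * s :=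
        le_of_mul_le_mul_left (by linarith) hs.1
      linarith
  simp only [Pi.sub_apply, zero_smul, add_zero, zero_mul, sub_zero, one_smul, add_sub_cancel,
    one_mul, mul_zero, mul_one, one_pow, ne_eq, OfNat.ofNat_ne_zero, not_false_eq_true,
    zero_pow] at key
  linarith

lemma sq_norm_gradient_sub_div_two_le {M : ℝ} (hM : 0 < M)
    (hgrad : ∀ z, HasGradientAt h (gh z) z) (hmono : ∀ a b, 0 ≤ ⟪gh a - gh b, a - b⟫)
    (hsmooth : ∀ a b, ⟪gh a - gh b, a - b⟫ ≤ M * ‖a - b‖ ^ 2) (x y : E) :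
    ‖gh x - gh y‖ ^ 2 / 2 ≤ M * (h x - h y - ⟪gh y, x - y⟫) := by
  set g := gh x - gh y
  set z := x - M⁻¹ • g
  have hconv := add_inner_le_of_monotone_gradient hgrad hmono z y
  have hdesc := le_add_inner_add_of_gradient_le hgrad hsmooth z x
  have hzy : z - y = (x - y) - M⁻¹ • g := by module
  have hzx : z - x = -(M⁻¹ • g) := by module
  rw [hzy, inner_sub_right, real_inner_smul_right] at hconv
  rw [hzx, inner_neg_right, real_inner_smul_right, norm_neg, norm_smul, mul_pow,
    Real.norm_eq_abs, sq_abs] at hdesc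
  have hg : ⟪gh x, g⟫ - ⟪gh y, g⟫ = ‖g‖ ^ 2 := by
    rw [← inner_sub_left, real_inner_self_eq_norm_sq]
  have hMM : M * M⁻¹ = 1 := mul_inv_cancel₀ hM.ne'
  linear_combination M * (hconv + hdesc) - M * M⁻¹ * hg + (M * M⁻¹ - 1) * ‖g‖ ^ 2 / 2 * hMM

end ConvexSmooth

section Potential

variable {E : Type*} [NormedAddCommGroup E] [InnerProductSpace ℝ E] {h : E → ℝ} {gh : E → E}
  {M : ℝ}

variable (h gh M) in
noncomputable def iqcPotential (xs x : E) : ℝ :=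
  M * (h x - h xs - ⟪gh xs, x - xs⟫) - ‖gh x - gh xs‖ ^ 2 / 2

lemma iqcPotential_nonneg
    (hinterp : ∀ x y, ‖gh x - gh y‖ ^ 2 / 2 ≤ M * (h x - h y - ⟪gh y, x - y⟫)) (xs x : E) :
    0 ≤ iqcPotential h gh M xs x :=
  sub_nonneg.2 (hinterp x xs)

lemma iqcPotential_le_inner
    (hinterp : ∀ x y, ‖gh x - gh y‖ ^ 2 / 2 ≤ M * (h x - h y - ⟪gh y, x - y⟫)) (xs x : E) :
    iqcPotential h gh M xs x ≤ ⟪gh x - gh xs, M • (x - xs) - (gh x - gh xs)⟫ := by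
  have key := hinterp xs x
  rw [norm_sub_rev, ← neg_sub x xs, inner_neg_right] at key
  have hrhs : ⟪gh x - gh xs, M • (x - xs) - (gh x - gh xs)⟫ =
      M * (⟪gh x, x - xs⟫ - ⟪gh xs, x - xs⟫) - ‖gh x - gh xs‖ ^ 2 := by
    rw [inner_sub_right, real_inner_smul_right, real_inner_self_eq_norm_sq, inner_sub_left]
  rw [iqcPotential, hrhs]
  linear_combination key

lemma iqcPotential_sub_le_inner
    (hinterp : ∀ x y, ‖gh x - gh y‖ ^ 2 / 2 ≤ M * (h x - h y - ⟪gh y, x - y⟫)) (xs x x' : E) :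
    iqcPotential h gh M xs x - iqcPotential h gh M xs x' ≤
      ⟪gh x - gh xs, M • ((x - xs) - (x' - xs)) - ((gh x - gh xs) - (gh x' - gh xs))⟫ := by
  have key := hinterp x' x
  rw [norm_sub_rev, ← neg_sub x x', inner_neg_right] at key
  have hrhs : ⟪gh x - gh xs, M • ((x - xs) - (x' - xs)) - ((gh x - gh xs) - (gh x' - gh xs))⟫ =
      M * (⟪gh x, x - x'⟫ - ⟪gh xs, x - x'⟫) - ⟪gh x - gh xs, gh x - gh x'⟫ := by
    rw [sub_sub_sub_cancel_right, sub_sub_sub_cancel_right, inner_sub_right, real_inner_smul_right,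
      inner_sub_left]
  have hxs : ⟪gh xs, x - x'⟫ = ⟪gh xs, x - xs⟫ - ⟪gh xs, x' - xs⟫ := by
    rw [← inner_sub_right, sub_sub_sub_cancel_right]
  have hnorm : ‖gh x' - gh xs‖ ^ 2 =
      ‖gh x - gh xs‖ ^ 2 - 2 * ⟪gh x - gh xs, gh x - gh x'⟫ + ‖gh x - gh x'‖ ^ 2 := by
    rw [← norm_sub_sq_real, sub_sub_sub_cancel_left]
  rw [iqcPotential, iqcPotential, hrhs, hnorm]
  linear_combination key + M * hxs

lemma inner_smul_sub_smul_sub_sub_smul_eq (a x x' u u' : E) (L c : ℝ) :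
    ⟪a, L • (x - c • x') - (u - c • u')⟫ =
      (1 - c) * ⟪a, L • x - u⟫ + c * ⟪a, L • (x - x') - (u - u')⟫ := by
  rw [← real_inner_smul_right, ← real_inner_smul_right, ← inner_add_right]
  congr 1
  module

lemma iqcPotential_sub_mul_le_inner
    (hinterp : ∀ x y, ‖gh x - gh y‖ ^ 2 / 2 ≤ M * (h x - h y - ⟪gh y, x - y⟫))
    {c : ℝ} (hc0 : 0 ≤ c) (hc1 : c ≤ 1) (xs x x' : E) :
    iqcPotential h gh M xs x - c * iqcPotential h gh M xs x' ≤
      ⟪gh x - gh xs, M • ((x - xs) - c • (x' - xs)) - ((gh x - gh xs) - c • (gh x' - gh xs))⟫ := by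
  rw [inner_smul_sub_smul_sub_sub_smul_eq]
  have hsector := mul_le_mul_of_nonneg_left (iqcPotential_le_inner hinterp xs x)
    (sub_nonneg.2 hc1)
  have hoff := mul_le_mul_of_nonneg_left (iqcPotential_sub_le_inner hinterp xs x x') hc0
  linarith

end Potential

section StronglyConvexSmooth

variable {E : Type*} [NormedAddCommGroup E] [InnerProductSpace ℝ E] [CompleteSpace E]
  {f : E → ℝ} {gf : E → E} {m L : ℝ}

lemma hasGradientAt_sub_mul_norm_sq (hgrad : ∀ x, HasGradientAt f (gf x) x) (x : E) :
    HasGradientAt (fun w => f w - m / 2 * ‖w‖ ^ 2) (gf x - m • x) x := by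
  rw [hasGradientAt_iff_hasFDerivAt]
  refine ((hgrad x).hasFDerivAt.sub ((hasFDerivAt_id x).norm_sq.const_mul (m / 2))).congr_fderiv ?_
  ext v
  simp [real_inner_comm]
  ring

lemma sq_norm_shifted_gradient_sub_div_two_le (hmL : m < L)
    (hgrad : ∀ x, HasGradientAt f (gf x) x)
    (hlow : ∀ x y, m * ‖x - y‖ ^ 2 ≤ ⟪gf x - gf y, x - y⟫)
    (hup : ∀ x y, ⟪gf x - gf y, x - y⟫ ≤ L * ‖x - y‖ ^ 2) (x y : E) :
    ‖(gf x - m • x) - (gf y - m • y)‖ ^ 2 / 2 ≤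
      (L - m) * ((f x - m / 2 * ‖x‖ ^ 2) - (f y - m / 2 * ‖y‖ ^ 2) - ⟪gf y - m • y, x - y⟫) := by
  have hshift (a b : E) :
      ⟪(gf a - m • a) - (gf b - m • b), a - b⟫ = ⟪gf a - gf b, a - b⟫ - m * ‖a - b‖ ^ 2 := by
    rw [← real_inner_self_eq_norm_sq, ← real_inner_smul_left, ← inner_sub_left]
    congr 1
    module
  refine sq_norm_gradient_sub_div_two_le (sub_pos.2 hmL) (hasGradientAt_sub_mul_norm_sq hgrad)
    (fun a b => ?_) (fun a b => ?_) x y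
  · linarith [hshift a b, hlow a b]
  · linarith [hshift a b, hup a b]

lemma iqcPotential_shifted_sub_mul_le_inner (hmL : m < L)
    (hgrad : ∀ x, HasGradientAt f (gf x) x)
    (hlow : ∀ x y, m * ‖x - y‖ ^ 2 ≤ ⟪gf x - gf y, x - y⟫)
    (hup : ∀ x y, ⟪gf x - gf y, x - y⟫ ≤ L * ‖x - y‖ ^ 2) {c : ℝ} (hc0 : 0 ≤ c) (hc1 : c ≤ 1)
    (xs x x' : E) :
    iqcPotential (fun w => f w - m / 2 * ‖w‖ ^ 2) (fun w => gf w - m • w) (L - m) xs x -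
        c * iqcPotential (fun w => f w - m / 2 * ‖w‖ ^ 2) (fun w => gf w - m • w) (L - m) xs x' ≤
      ⟪gf x - gf xs - m • (x - xs),
        L • ((x - xs) - c • (x' - xs)) - ((gf x - gf xs) - c • (gf x' - gf xs))⟫ := by
  refine (iqcPotential_sub_mul_le_inner
    (sq_norm_shifted_gradient_sub_div_two_le hmL hgrad hlow hup) hc0 hc1 xs x x').trans_eq ?_
  congr 1 <;> module

end StronglyConvexSmooth

lemma mul_le_add_sum_Icc_of_sub_mul_le {a c : ℝ} {w φ T : ℕ → ℝ} (hw : ∀ t, 0 ≤ w t)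
    (hwc : ∀ t, w (t + 1) * c ≤ w t) (hφ : ∀ t, 0 ≤ φ t) (h0 : w 0 * φ 0 ≤ a)
    (hT : ∀ t, 1 ≤ t → φ t - c * φ (t - 1) ≤ T t) (k : ℕ) :
    w k * φ k ≤ a + ∑ t ∈ Icc 1 k, w t * T t := by
  induction k with
  | zero => simpa using h0
  | succ k ih =>
    rw [sum_Icc_succ_top (by omega)]
    have hstep := mul_le_mul_of_nonneg_left (hT (k + 1) (by omega)) (hw (k + 1))
    rw [Nat.add_sub_cancel] at hstep
    linear_combination ih + hstep + mul_le_mul_of_nonneg_right (hwc k) (hφ k)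

lemma inv_pow_two_mul_succ_mul_sq_le {a b : ℝ} (ha : 0 ≤ a) (hab : a ≤ b) (t : ℕ) :
    (b ^ (2 * (t + 1)))⁻¹ * a ^ 2 ≤ (b ^ (2 * t))⁻¹ := by
  have hb : 0 ≤ b := ha.trans hab
  rw [mul_add, mul_one, pow_add, mul_inv, mul_assoc]
  exact mul_le_of_le_one_right (by positivity)
    (inv_mul_le_one_of_le₀ (pow_le_pow_left₀ ha hab 2) (by positivity))

theorem weighted_off_by_one_rho_hard_iqc_general {d : ℕ} (m L : ℝ) (hmL : m < L)
    (ρbar ρ : ℝ) (h0 : 0 ≤ ρbar) (h1 : ρbar ≤ ρ) (h2 : ρ ≤ 1)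
    (f : EuclideanSpace ℝ (Fin d) → ℝ)
    (gf : EuclideanSpace ℝ (Fin d) → EuclideanSpace ℝ (Fin d))
    (hgrad : ∀ x, HasGradientAt f (gf x) x)
    (hlow : ∀ x y, m * ‖x - y‖ ^ 2 ≤ ⟪gf x - gf y, x - y⟫)
    (hup : ∀ x y, ⟪gf x - gf y, x - y⟫ ≤ L * ‖x - y‖ ^ 2)
    (ystar : EuclideanSpace ℝ (Fin d))
    (y : ℕ → EuclideanSpace ℝ (Fin d)) :
    ∀ k : ℕ,
      0 ≤ ⟪gf (y 0) - gf ystar - m • (y 0 - ystar),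
            L • (y 0 - ystar) - (gf (y 0) - gf ystar)⟫ +
          ∑ t ∈ Icc 1 k,
            (ρ ^ (2 * t))⁻¹ *
              ⟪gf (y t) - gf ystar - m • (y t - ystar),
                L • ((y t - ystar) - ρbar ^ 2 • (y (t - 1) - ystar))
                  - ((gf (y t) - gf ystar) - ρbar ^ 2 • (gf (y (t - 1)) - gf ystar))⟫ := by
  intro k
  have hw (t : ℕ) : 0 ≤ (ρ ^ (2 * t))⁻¹ := inv_nonneg.2 (pow_nonneg (h0.trans h1) _)
  have hφ (t : ℕ) := iqcPotential_nonneg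
    (sq_norm_shifted_gradient_sub_div_two_le hmL hgrad hlow hup) ystar (y t)
  refine (mul_nonneg (hw k) (hφ k)).trans (mul_le_add_sum_Icc_of_sub_mul_le (c := ρbar ^ 2) hw
    (inv_pow_two_mul_succ_mul_sq_le h0 h1) hφ ?_
    (fun t _ => iqcPotential_shifted_sub_mul_le_inner hmL hgrad hlow hup (sq_nonneg ρbar)
      (pow_le_one₀ h0 (h1.trans h2)) ystar (y t) (y (t - 1))) k)
  -- the base term is the case `c = 0`
  simpa using iqcPotential_shifted_sub_mul_le_inner hmL hgrad hlow hup le_rfl zero_le_one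
    ystar (y 0) (y 0)

/-- The weighted off-by-one `ρ`-hard IQC satisfied by gradients of functions in
`S(m,L)`, for any `0 ≤ ρ̄ ≤ ρ ≤ 1`. -/
theorem weighted_off_by_one_rho_hard_iqc {d : ℕ} (m L : ℝ) (hm : 0 < m) (hmL : m < L)
    (ρbar ρ : ℝ) (h0 : 0 ≤ ρbar) (h1 : ρbar ≤ ρ) (h2 : ρ ≤ 1)
    (f : EuclideanSpace ℝ (Fin d) → ℝ)
    (gf : EuclideanSpace ℝ (Fin d) → EuclideanSpace ℝ (Fin d))
    (hgrad : ∀ x, HasGradientAt f (gf x) x)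
    (hlow : ∀ x y, m * ‖x - y‖ ^ 2 ≤ ⟪gf x - gf y, x - y⟫)
    (hup : ∀ x y, ⟪gf x - gf y, x - y⟫ ≤ L * ‖x - y‖ ^ 2)
    (ystar : EuclideanSpace ℝ (Fin d))
    (y : ℕ → EuclideanSpace ℝ (Fin d)) :
    ∀ k : ℕ,
      0 ≤ ⟪gf (y 0) - gf ystar - m • (y 0 - ystar),
            L • (y 0 - ystar) - (gf (y 0) - gf ystar)⟫ +
          ∑ t ∈ Icc 1 k,
            (ρ ^ (2 * t))⁻¹ *
              ⟪gf (y t) - gf ystar - m • (y t - ystar),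
                L • ((y t - ystar) - ρbar ^ 2 • (y (t - 1) - ystar))
                  - ((gf (y t) - gf ystar) - ρbar ^ 2 • (gf (y (t - 1)) - gf ystar))⟫ :=
  weighted_off_by_one_rho_hard_iqc_general m L hmL ρbar ρ h0 h1 h2 f gf hgrad hlow hup ystar y
end

section
/- (Lossless dimensionality reduction) Let Â₀ ∈ ℝ^{n×n}, B̂₀ ∈ ℝ^{n×p}, Ĉ₀ ∈ ℝ^{q×n}, D̂₀ ∈ ℝ^{q×p}, M₀ ∈ ℝ^{q×q} symmetric, and let d ≥ 1. Set Â = Â₀⊗I_d, B̂ = B̂₀⊗I_d, Ĉ = Ĉ₀⊗I_d, D̂ = D̂₀⊗I_d, M = M₀⊗I_d. Then there exists P ≻ 0 (of size nd) and λ ≥ 0 satisfying [[ÂᵀPÂ - ρ²P, ÂᵀPB̂],[B̂ᵀPÂ, B̂ᵀPB̂]] + λ[Ĉ D̂]ᵀM[Ĉ D̂] ⪯ 0 if and only if there exists P₀ ≻ 0 (of size n) and λ ≥ 0 satisfying the same LMI with (Â₀, B̂₀, Ĉ₀, D̂₀, M₀, P₀). -/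
open Matrix Kronecker

/-!
The LMI matrix is `-(GᵀPG - ρ²EᵀPE + λHᵀMH)` with `G = [A B]`, `E = [I 0]`, `H = [C D]`,
a sum of congruences. Kronecker data `X ⊗ I_d` keep this shape after the
reindexing `(n ⊕ p) × d ≃ n × d ⊕ p × d`. A reduced certificate `P₀` lifts to `P₀ ⊗ I_d`, for which
the LMI matrix is the reduced one tensored with `I_d`. Conversely, restricting the expanded LMI
matrix to the coordinates `(·, k)` of one copy gives the reduced LMI matrix at the principal
submatrix `P_kk` of `P`, which is again positive definite.
-/

section

variable {R : Type*} [CommRing R] {ι κ m n p r d : Type*}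

theorem fromCols_kronecker_one [DecidableEq d] (A : Matrix m n R) (B : Matrix m p R) :
    fromCols (A ⊗ₖ (1 : Matrix d d R)) (B ⊗ₖ (1 : Matrix d d R)) =
      (fromCols A B ⊗ₖ (1 : Matrix d d R)).submatrix id (Equiv.sumProdDistrib n p d).symm := by
  ext ⟨i, k⟩ (⟨j, l⟩ | ⟨j, l⟩) <;> simp

def iqcLMI [Fintype m] [Fintype r] (ρ lam : R) (G E : Matrix m ι R) (H : Matrix r ι R)
    (M : Matrix r r R) (P : Matrix m m R) : Matrix ι ι R :=
  -(Gᵀ * P * G - ρ ^ 2 • (Eᵀ * P * E) + lam • (Hᵀ * M * H))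

variable [Fintype m] [Fintype r]

theorem fromBlocks_eq_iqcLMI [Fintype p] [DecidableEq m] (ρ lam : R) (A : Matrix m m R)
    (B : Matrix m p R) (C : Matrix r m R) (D : Matrix r p R) (M : Matrix r r R)
    (P : Matrix m m R) :
    -(fromBlocks (Aᵀ * P * A - ρ ^ 2 • P) (Aᵀ * P * B) (Bᵀ * P * A) (Bᵀ * P * B) +
        lam • ((fromCols C D)ᵀ * M * fromCols C D)) =
      iqcLMI ρ lam (fromCols A B) (fromCols 1 0) (fromCols C D) M P := by
  simp only [iqcLMI, transpose_fromCols, fromRows_mul]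
  congr 2
  ext (i | i) (j | j) <;> simp

theorem transpose_mul_mul_submatrix (G : Matrix m ι R) (X : Matrix m m R) (e : κ → ι) :
    (G.submatrix id e)ᵀ * X * G.submatrix id e = (Gᵀ * X * G).submatrix e e := by
  rw [submatrix_mul _ _ _ id _ Function.bijective_id,
    submatrix_mul _ _ _ id _ Function.bijective_id, transpose_submatrix, submatrix_id_id]

theorem iqcLMI_submatrix (ρ lam : R) (G E : Matrix m ι R) (H : Matrix r ι R)
    (M : Matrix r r R) (P : Matrix m m R) (e : κ → ι) :
    iqcLMI ρ lam (G.submatrix id e) (E.submatrix id e) (H.submatrix id e) M P =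
      (iqcLMI ρ lam G E H M P).submatrix e e := by
  simp only [iqcLMI, transpose_mul_mul_submatrix]
  rfl

variable [Fintype d] [DecidableEq d]

theorem transpose_mul_mul_kronecker_one (G : Matrix m ι R) (X : Matrix m m R) :
    (G ⊗ₖ (1 : Matrix d d R))ᵀ * (X ⊗ₖ (1 : Matrix d d R)) * (G ⊗ₖ (1 : Matrix d d R)) =
      (Gᵀ * X * G) ⊗ₖ (1 : Matrix d d R) := by
  rw [← kroneckerMap_transpose, transpose_one, ← mul_kronecker_mul, ← mul_kronecker_mul, one_mul,
    one_mul]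

theorem iqcLMI_kronecker_one (ρ lam : R) (G E : Matrix m ι R) (H : Matrix r ι R)
    (M : Matrix r r R) (P : Matrix m m R) :
    iqcLMI ρ lam (G ⊗ₖ (1 : Matrix d d R)) (E ⊗ₖ (1 : Matrix d d R)) (H ⊗ₖ (1 : Matrix d d R))
        (M ⊗ₖ (1 : Matrix d d R)) (P ⊗ₖ (1 : Matrix d d R)) =
      iqcLMI ρ lam G E H M P ⊗ₖ (1 : Matrix d d R) := by
  simp only [iqcLMI, transpose_mul_mul_kronecker_one]
  ext ⟨i, k⟩ ⟨j, l⟩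
  simp [sub_mul, add_mul, mul_assoc]

theorem submatrix_transpose_mul_mul_kronecker_one (G : Matrix m ι R)
    (X : Matrix (m × d) (m × d) R) (k : d) :
    ((G ⊗ₖ (1 : Matrix d d R))ᵀ * X * (G ⊗ₖ (1 : Matrix d d R))).submatrix (·, k) (·, k) =
      Gᵀ * X.submatrix (·, k) (·, k) * G := by
  ext i j
  simp [mul_apply, Fintype.sum_prod_type, one_apply, Finset.sum_mul]

theorem iqcLMI_kronecker_one_submatrix (ρ lam : R) (G E : Matrix m ι R) (H : Matrix r ι R)
    (M : Matrix r r R) (P : Matrix (m × d) (m × d) R) (k : d) :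
    (iqcLMI ρ lam (G ⊗ₖ (1 : Matrix d d R)) (E ⊗ₖ (1 : Matrix d d R)) (H ⊗ₖ (1 : Matrix d d R))
        (M ⊗ₖ (1 : Matrix d d R)) P).submatrix (·, k) (·, k) =
      iqcLMI ρ lam G E H M (P.submatrix (·, k) (·, k)) := by
  have hM : (M ⊗ₖ (1 : Matrix d d R)).submatrix (·, k) (·, k) = M := by ext; simp
  simp only [iqcLMI, submatrix_neg, submatrix_sub, submatrix_add, submatrix_smul, Pi.neg_apply,
    Pi.sub_apply, Pi.add_apply, Pi.smul_apply, submatrix_transpose_mul_mul_kronecker_one, hM]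

theorem fromBlocks_kronecker_one_eq_iqcLMI [Fintype n] [Fintype p] [DecidableEq n] (ρ lam : R)
    (A : Matrix n n R) (B : Matrix n p R) (C : Matrix r n R) (D : Matrix r p R)
    (M : Matrix r r R) (P : Matrix (n × d) (n × d) R) :
    -(fromBlocks
        ((A ⊗ₖ (1 : Matrix d d R))ᵀ * P * (A ⊗ₖ (1 : Matrix d d R)) - ρ ^ 2 • P)
        ((A ⊗ₖ (1 : Matrix d d R))ᵀ * P * (B ⊗ₖ (1 : Matrix d d R)))
        ((B ⊗ₖ (1 : Matrix d d R))ᵀ * P * (A ⊗ₖ (1 : Matrix d d R)))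
        ((B ⊗ₖ (1 : Matrix d d R))ᵀ * P * (B ⊗ₖ (1 : Matrix d d R))) +
      lam • ((fromCols (C ⊗ₖ (1 : Matrix d d R)) (D ⊗ₖ (1 : Matrix d d R)))ᵀ *
        (M ⊗ₖ (1 : Matrix d d R)) * fromCols (C ⊗ₖ (1 : Matrix d d R)) (D ⊗ₖ (1 : Matrix d d R)))) =
      (iqcLMI ρ lam (fromCols A B ⊗ₖ (1 : Matrix d d R)) (fromCols 1 0 ⊗ₖ (1 : Matrix d d R))
        (fromCols C D ⊗ₖ (1 : Matrix d d R)) (M ⊗ₖ (1 : Matrix d d R)) P).submatrix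
        (Equiv.sumProdDistrib n p d).symm (Equiv.sumProdDistrib n p d).symm := by
  rw [fromBlocks_eq_iqcLMI, ← iqcLMI_submatrix, ← fromCols_kronecker_one, ← fromCols_kronecker_one,
    ← fromCols_kronecker_one, one_kronecker_one, zero_kronecker]

end

theorem lossless_dimensionality_reduction_general {n p q d : ℕ} (hd : 1 ≤ d) (ρ : ℝ)
    (A₀ : Matrix (Fin n) (Fin n) ℝ) (B₀ : Matrix (Fin n) (Fin p) ℝ)
    (C₀ : Matrix (Fin q) (Fin n) ℝ) (D₀ : Matrix (Fin q) (Fin p) ℝ)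
    (M₀ : Matrix (Fin q) (Fin q) ℝ) :
    (∃ (P : Matrix (Fin n × Fin d) (Fin n × Fin d) ℝ) (lam : ℝ), P.PosDef ∧ 0 ≤ lam ∧
      (-(Matrix.fromBlocks
          ((A₀ ⊗ₖ (1 : Matrix (Fin d) (Fin d) ℝ))ᵀ * P * (A₀ ⊗ₖ (1 : Matrix (Fin d) (Fin d) ℝ))
              - ρ ^ 2 • P)
          ((A₀ ⊗ₖ (1 : Matrix (Fin d) (Fin d) ℝ))ᵀ * P * (B₀ ⊗ₖ (1 : Matrix (Fin d) (Fin d) ℝ)))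
          ((B₀ ⊗ₖ (1 : Matrix (Fin d) (Fin d) ℝ))ᵀ * P * (A₀ ⊗ₖ (1 : Matrix (Fin d) (Fin d) ℝ)))
          ((B₀ ⊗ₖ (1 : Matrix (Fin d) (Fin d) ℝ))ᵀ * P * (B₀ ⊗ₖ (1 : Matrix (Fin d) (Fin d) ℝ))) +
        lam • ((Matrix.fromCols (C₀ ⊗ₖ (1 : Matrix (Fin d) (Fin d) ℝ))
                  (D₀ ⊗ₖ (1 : Matrix (Fin d) (Fin d) ℝ)))ᵀ *
                (M₀ ⊗ₖ (1 : Matrix (Fin d) (Fin d) ℝ)) *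
                Matrix.fromCols (C₀ ⊗ₖ (1 : Matrix (Fin d) (Fin d) ℝ))
                  (D₀ ⊗ₖ (1 : Matrix (Fin d) (Fin d) ℝ))))).PosSemidef)
    ↔
    (∃ (P₀ : Matrix (Fin n) (Fin n) ℝ) (lam : ℝ), P₀.PosDef ∧ 0 ≤ lam ∧
      (-(Matrix.fromBlocks (A₀ᵀ * P₀ * A₀ - ρ ^ 2 • P₀) (A₀ᵀ * P₀ * B₀)
          (B₀ᵀ * P₀ * A₀) (B₀ᵀ * P₀ * B₀) +
        lam • ((Matrix.fromCols C₀ D₀)ᵀ * M₀ * Matrix.fromCols C₀ D₀))).PosSemidef) := by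
  simp_rw [fromBlocks_kronecker_one_eq_iqcLMI, posSemidef_submatrix_equiv, fromBlocks_eq_iqcLMI]
  constructor
  · rintro ⟨P, lam, hP, hlam, hLMI⟩
    let k : Fin d := ⟨0, hd⟩
    refine ⟨P.submatrix (·, k) (·, k), lam, hP.submatrix (Prod.mk_left_injective k), hlam, ?_⟩
    rw [← iqcLMI_kronecker_one_submatrix]
    exact hLMI.submatrix _
  · rintro ⟨P₀, lam, hP₀, hlam, hLMI⟩
    refine ⟨P₀ ⊗ₖ 1, lam, hP₀.kronecker PosDef.one, hlam, ?_⟩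
    rw [iqcLMI_kronecker_one]
    exact hLMI.kronecker PosSemidef.one

/-- Lossless dimensionality reduction: the Kronecker-expanded IQC LMI (with blocks
`X₀ ⊗ I_d`) is feasible iff the reduced (`d = 1`) LMI is feasible. -/
theorem lossless_dimensionality_reduction {n p q d : ℕ} (hd : 1 ≤ d) (ρ : ℝ) (hρ : 0 ≤ ρ)
    (A₀ : Matrix (Fin n) (Fin n) ℝ) (B₀ : Matrix (Fin n) (Fin p) ℝ)
    (C₀ : Matrix (Fin q) (Fin n) ℝ) (D₀ : Matrix (Fin q) (Fin p) ℝ)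
    (M₀ : Matrix (Fin q) (Fin q) ℝ) (hM₀ : M₀.IsHermitian) :
    (∃ (P : Matrix (Fin n × Fin d) (Fin n × Fin d) ℝ) (lam : ℝ), P.PosDef ∧ 0 ≤ lam ∧
      (-(Matrix.fromBlocks
          ((A₀ ⊗ₖ (1 : Matrix (Fin d) (Fin d) ℝ))ᵀ * P * (A₀ ⊗ₖ (1 : Matrix (Fin d) (Fin d) ℝ))
              - ρ ^ 2 • P)
          ((A₀ ⊗ₖ (1 : Matrix (Fin d) (Fin d) ℝ))ᵀ * P * (B₀ ⊗ₖ (1 : Matrix (Fin d) (Fin d) ℝ)))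
          ((B₀ ⊗ₖ (1 : Matrix (Fin d) (Fin d) ℝ))ᵀ * P * (A₀ ⊗ₖ (1 : Matrix (Fin d) (Fin d) ℝ)))
          ((B₀ ⊗ₖ (1 : Matrix (Fin d) (Fin d) ℝ))ᵀ * P * (B₀ ⊗ₖ (1 : Matrix (Fin d) (Fin d) ℝ))) +
        lam • ((Matrix.fromCols (C₀ ⊗ₖ (1 : Matrix (Fin d) (Fin d) ℝ))
                  (D₀ ⊗ₖ (1 : Matrix (Fin d) (Fin d) ℝ)))ᵀ *
                (M₀ ⊗ₖ (1 : Matrix (Fin d) (Fin d) ℝ)) *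
                Matrix.fromCols (C₀ ⊗ₖ (1 : Matrix (Fin d) (Fin d) ℝ))
                  (D₀ ⊗ₖ (1 : Matrix (Fin d) (Fin d) ℝ))))).PosSemidef)
    ↔
    (∃ (P₀ : Matrix (Fin n) (Fin n) ℝ) (lam : ℝ), P₀.PosDef ∧ 0 ≤ lam ∧
      (-(Matrix.fromBlocks (A₀ᵀ * P₀ * A₀ - ρ ^ 2 • P₀) (A₀ᵀ * P₀ * B₀)
          (B₀ᵀ * P₀ * A₀) (B₀ᵀ * P₀ * B₀) +
        lam • ((Matrix.fromCols C₀ D₀)ᵀ * M₀ * Matrix.fromCols C₀ D₀))).PosSemidef) :=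
  lossless_dimensionality_reduction_general hd ρ A₀ B₀ C₀ D₀ M₀
end

section
/- Define g: ℝ → ℝ by g(x) = 25x for x < 1, g(x) = x + 24 for 1 ≤ x < 2, and g(x) = 25x - 24 for x ≥ 2. Then g is continuous, and satisfies the strong monotonicity/Lipschitz bounds (g(x)-g(y))(x-y) ≥ (x-y)² and (g(x)-g(y))(x-y) ≤ 25(x-y)² for all x, y ∈ ℝ. Hence g is the gradient of a function f ∈ S(1,25). -/
/-- The piecewise-linear counterexample gradient `g` is continuous, strongly monotone
with parameter 1 and Lipschitz-monotone with parameter 25, and is the derivative of a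
function (so it is the gradient of some `f ∈ S(1,25)`). -/
theorem counterexample_gradient_in_S_1_25
    (g : ℝ → ℝ)
    (hg : ∀ x : ℝ, g x = if x < 1 then 25 * x else if x < 2 then x + 24 else 25 * x - 24) :
    Continuous g ∧
    (∀ x y : ℝ, (x - y) ^ 2 ≤ (g x - g y) * (x - y)) ∧
    (∀ x y : ℝ, (g x - g y) * (x - y) ≤ 25 * (x - y) ^ 2) ∧
    (∃ f : ℝ → ℝ, ∀ x : ℝ, HasDerivAt f (g x) x) := by
  have hrep : ∀ x : ℝ, g x = x + 24 * (min x 1 + max (x - 2) 0) := by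
    intro x
    rw [hg x]
    rcases lt_or_ge x 1 with h1 | h1
    · rw [if_pos h1, min_eq_left h1.le, max_eq_right (by linarith)]; ring
    · rw [if_neg (not_lt.mpr h1), min_eq_right h1]
      rcases lt_or_ge x 2 with h2 | h2
      · rw [if_pos h2, max_eq_right (by linarith)]; ring
      · rw [if_neg (not_lt.mpr h2), max_eq_left (by linarith)]; ring
  have hgeq : g = fun x => x + 24 * (min x 1 + max (x - 2) 0) := funext hrep
  have hcont : Continuous g := by
    rw [hgeq]; fun_prop
  refine ⟨hcont, ?_, ?_, ?_⟩
  · intro x y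
    rw [hg x, hg y]
    split_ifs <;> nlinarith
  · intro x y
    rw [hg x, hg y]
    split_ifs <;> nlinarith
  · refine ⟨fun x => ∫ t in (0:ℝ)..x, g t, fun x => ?_⟩
    exact intervalIntegral.integral_hasDerivAt_right
      (hcont.intervalIntegrable 0 x) hcont.aestronglyMeasurable.stronglyMeasurableAtFilter
      hcont.continuousAt
end

section
/- Let g be the piecewise linear function g(x) = 25x for x < 1, x + 24 for 1 ≤ x < 2, 25x - 24 for x ≥ 2, and consider the Heavy-ball recursion x_{k+1} = (13/9)x_k - (4/9)x_{k-1} - (1/9)g(x_k). Then the 3-periodic sequence with values p = 792/1225, q = -2208/1225, r = 2592/1225 (i.e., x_{3n} = p, x_{3n+1} = q, x_{3n+2} = r) is an exact solution of the recursion, and p < 1, q < 1, r > 2. -/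
/-- The Heavy-ball method with `α = 1/9`, `β = 4/9` on the piecewise-linear
counterexample admits an exact 3-periodic limit cycle `p, q, r` with `p < 1`, `q < 1`,
`r > 2`. -/
theorem heavy_ball_limit_cycle
    (g : ℝ → ℝ)
    (hg : ∀ x : ℝ, g x = if x < 1 then 25 * x else if x < 2 then x + 24 else 25 * x - 24)
    (x : ℕ → ℝ)
    (hx : ∀ n : ℕ, x n = if n % 3 = 0 then 792 / 1225
      else if n % 3 = 1 then -2208 / 1225 else 2592 / 1225) :
    (∀ k : ℕ, x (k + 2) = (13 / 9) * x (k + 1) - (4 / 9) * x k - (1 / 9) * g (x (k + 1))) ∧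
    (792 / 1225 : ℝ) < 1 ∧ (-2208 / 1225 : ℝ) < 1 ∧ (2 : ℝ) < 2592 / 1225 := by
  refine ⟨fun k => ?_, by norm_num, by norm_num, by norm_num⟩
  rw [hx (k+2), hx (k+1), hx k, hg]
  have hk : k % 3 = 0 ∨ k % 3 = 1 ∨ k % 3 = 2 := by omega
  have h1 : (k+1) % 3 = (k % 3 + 1) % 3 := by omega
  have h2 : (k+2) % 3 = (k % 3 + 2) % 3 := by omega
  rcases hk with h | h | h <;> rw [h1, h2, h] <;> norm_num
end
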